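/- arXiv:0808.4012 — 7 statements merged into one kernel-verified Lean document; each statement's English description precedes it below -/
import Mathlib

section
/- Pathwise superhedging inequality H^I: for any continuous path (S_t)_{t∈[0,T]} with S_0 ∈ (b̲, b̄), any K > b̲, the indicator that both barriers are hit, 1{sup_{t≤T} S_t ≥ b̄ and inf_{t≤T} S_t ≤ b̲}, is at most (K−S_T)^+/(K−b̲) + (S_T−b̲)/(K−b̲)·1{inf_{t≤T} S_t ≤ b̲}. -/
/-!
On the event that the minimum reaches `lb`, the put `(K - S_T)^+` together with the forward
`S_T - lb` bought at that time already pays at least `K - lb`; off that event the left side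
vanishes and the put payoff is nonnegative.
-/

open scoped Classical

theorem one_le_max_sub_div_add_sub_div {lb K : ℝ} (hK : lb < K) (x : ℝ) :
    1 ≤ max (K - x) 0 / (K - lb) + (x - lb) / (K - lb) := by
  rw [← add_div, one_le_div (sub_pos.2 hK)]
  linarith [le_max_left (K - x) 0]

theorem stmt2_general (T lb ub K : ℝ) (S : ℝ → ℝ)
    (hK : lb < K) :
    (if ub ≤ sSup (S '' Set.Icc 0 T) ∧ sInf (S '' Set.Icc 0 T) ≤ lb
      then (1 : ℝ) else 0)
      ≤ max (K - S T) 0 / (K - lb)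
        + (S T - lb) / (K - lb) *
          (if sInf (S '' Set.Icc 0 T) ≤ lb then (1 : ℝ) else 0) := by
  by_cases hinf : sInf (S '' Set.Icc 0 T) ≤ lb
  · rw [if_pos hinf, mul_one]
    exact (ite_le_one le_rfl zero_le_one).trans (one_le_max_sub_div_add_sub_div hK (S T))
  · rw [if_neg fun h => hinf h.2, if_neg hinf, mul_zero, add_zero]
    exact div_nonneg (le_max_right _ _) (sub_pos.2 hK).le

/-- Pathwise superhedging inequality H^I for the double touch option. -/
theorem stmt2 (T lb ub K : ℝ) (S : ℝ → ℝ)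
    (hT : 0 < T) (hcont : ContinuousOn S (Set.Icc 0 T))
    (hlb : 0 < lb) (h1 : lb < S 0) (h2 : S 0 < ub)
    (hK : lb < K) :
    (if ub ≤ sSup (S '' Set.Icc 0 T) ∧ sInf (S '' Set.Icc 0 T) ≤ lb
      then (1 : ℝ) else 0)
      ≤ max (K - S T) 0 / (K - lb)
        + (S T - lb) / (K - lb) *
          (if sInf (S '' Set.Icc 0 T) ≤ lb then (1 : ℝ) else 0) :=
  stmt2_general T lb ub K S hK
end

section
/- Pathwise superhedging inequality H^IV: let 0 < K₂ < b̲ < S_0 < b̄ < K₁ and define α₁ = 1/(K₁−b̲), α₂ = 1/(b̄−K₂), α₃ = ((K₁−b̲)−(b̄−K₂))/((K₁−b̲)(b̄−K₂)), α₄ = (b̲b̄−K₁K₂)/((K₁−b̲)(b̄−K₂)) + α₃S_0, β₁ = β₄ = 1/(b̄−K₂), β₂ = β₃ = 1/(K₁−b̲). Then for any continuous path S with hitting times H_x = inf{t : S_t = x}, 1{S̄_T ≥ b̄, S̲_T ≤ b̲} ≤ α₁(S_T−K₁)^+ + α₂(K₂−S_T)^+ + α₃(S_T−S_0) + α₄ −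 β₁(S_T−b̄)1{H_b̄ < H_b̲ ∧ T} + β₂(S_T−b̲)1{H_b̲ < H_b̄ ∧ T} + β₃(S_T−b̲)1{H_b̄ < H_b̲ ≤ T} − β₄(S_T−b̄)1{H_b̲ < H_b̄ ≤ T}. -/
/-!
Let `V(x) = α₁(x-K₁)⁺ + α₂(K₂-x)⁺ + α₃(x-S₀) + α₄` be the static part of the hedge. The two
forward positions in `S_T - b̄` (entered at `H_b̄`, before or after `H_b̲`) add up to one exactly
when `b̄` is hit, except when `b̄` is first hit at `T`, where their gain `S_T - b̄` vanishes
anyway; likewise for `b̲`. So the right-hand side is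
`V(S_T) - β₁(S_T - b̄)·1{b̄ hit} + β₂(S_T - b̲)·1{b̲ hit}`.
By put-call parity this is `1 + α₁(S_T-K₁)⁺ + α₂(K₂-S_T)⁺` when both levels are hit, a sum
of two puts or two calls when only one is, and `V(S_T)` with `S_T ∈ [b̲, b̄]` when neither is;
`V` is linear and positive on `[b̲, b̄]`. By the intermediate value theorem the double touch
event forces both levels to be hit.
-/

open Set
open scoped Classical ENNReal

/-- First hitting time of level `x` by the path `S` on `[0,T]`
(`∞` if the level is never hit). -/
noncomputable def hitTime (S : ℝ → ℝ) (T x : ℝ) : ℝ≥0∞ :=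
  ⨅ (t : {t : ℝ // t ∈ Set.Icc 0 T ∧ S t = x}), ENNReal.ofReal t.1

section HitTime

variable {S : ℝ → ℝ} {T x : ℝ}

lemma hitTime_eq_top (h : x ∉ S '' Icc 0 T) : hitTime S T x = ⊤ := by
  have : IsEmpty {t : ℝ // t ∈ Icc 0 T ∧ S t = x} := ⟨fun t => h ⟨t.1, t.2.1, t.2.2⟩⟩
  simp [hitTime]

lemma exists_hitTime_eq_ofReal (hS : ContinuousOn S (Icc 0 T)) (h : x ∈ S '' Icc 0 T) :
    ∃ t ∈ Icc 0 T, S t = x ∧ hitTime S T x = ENNReal.ofReal t := by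
  set A := Icc 0 T ∩ S ⁻¹' {x}
  have hA : IsClosed A := hS.preimage_isClosed_of_isClosed isClosed_Icc isClosed_singleton
  have hne : A.Nonempty := by
    obtain ⟨t, ht, rfl⟩ := h
    exact ⟨t, ht, rfl⟩
  have hbdd : BddBelow A := ⟨0, fun s hs => hs.1.1⟩
  obtain ⟨hmem, hval⟩ := hA.csInf_mem hne hbdd
  refine ⟨sInf A, hmem, hval, le_antisymm (iInf_le_of_le ⟨_, hmem, hval⟩ le_rfl) ?_⟩
  exact le_iInf fun s => ENNReal.ofReal_le_ofReal (csInf_le hbdd ⟨s.2.1, s.2.2⟩)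

lemma sub_mul_hitTime_indicators {y : ℝ} (hS : ContinuousOn S (Icc 0 T)) (hxy : x ≠ y) :
    (S T - x) * ((if hitTime S T x < min (hitTime S T y) (ENNReal.ofReal T) then (1 : ℝ) else 0)
        + (if hitTime S T y < hitTime S T x ∧ hitTime S T x ≤ ENNReal.ofReal T then 1 else 0))
      = (S T - x) * (if x ∈ S '' Icc 0 T then 1 else 0) := by
  by_cases hx : x ∈ S '' Icc 0 T
  · obtain ⟨tx, htx, hSx, hτx⟩ := exists_hitTime_eq_ofReal hS hx
    rw [if_pos hx, hτx]
    by_cases hy : y ∈ S '' Icc 0 T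
    · obtain ⟨ty, hty, hSy, hτy⟩ := exists_hitTime_eq_ofReal hS hy
      have hne : tx ≠ ty := by
        rintro rfl
        exact hxy (hSx.symm.trans hSy)
      rw [hτy]
      rcases hne.lt_or_gt with h | h
      · have hxy' := (ENNReal.ofReal_lt_ofReal_iff_of_nonneg htx.1).2 h
        have hxT := (ENNReal.ofReal_lt_ofReal_iff_of_nonneg htx.1).2 (h.trans_le hty.2)
        simp [hxy', hxT, not_lt.2 hxy'.le]
      · have hyx := (ENNReal.ofReal_lt_ofReal_iff_of_nonneg hty.1).2 h
        simp [hyx, ENNReal.ofReal_le_ofReal htx.2, not_lt.2 hyx.le]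
    · rw [hitTime_eq_top hy]
      rcases htx.2.lt_or_eq with h | rfl
      · simp [ENNReal.ofReal_lt_ofReal_iff_of_nonneg htx.1, h]
      · simp [hSx]
  · simp [hx, hitTime_eq_top hx]

end HitTime

section Path

variable {S : ℝ → ℝ} {T y : ℝ} (hS : ContinuousOn S (Icc 0 T)) (hT : 0 ≤ T)
include hS hT

lemma mem_image_of_le_sSup (h0 : S 0 ≤ y) (hy : y ≤ sSup (S '' Icc 0 T)) :
    y ∈ S '' Icc 0 T :=
  (isPreconnected_Icc.image S hS).Icc_subset (mem_image_of_mem S ⟨le_rfl, hT⟩)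
    ((isCompact_Icc.image_of_continuousOn hS).sSup_mem ⟨S 0, mem_image_of_mem S ⟨le_rfl, hT⟩⟩)
    ⟨h0, hy⟩

lemma mem_image_of_sInf_le (h0 : y ≤ S 0) (hy : sInf (S '' Icc 0 T) ≤ y) :
    y ∈ S '' Icc 0 T :=
  (isPreconnected_Icc.image S hS).Icc_subset
    ((isCompact_Icc.image_of_continuousOn hS).sInf_mem ⟨S 0, mem_image_of_mem S ⟨le_rfl, hT⟩⟩)
    (mem_image_of_mem S ⟨le_rfl, hT⟩) ⟨hy, h0⟩

lemma mem_Icc_of_notMem_image {lb ub : ℝ} (hl : lb ≤ S 0) (hu : S 0 ≤ ub)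
    (hub : ub ∉ S '' Icc 0 T) (hlb : lb ∉ S '' Icc 0 T) : S T ∈ Icc lb ub := by
  have hconn := isPreconnected_Icc.image S hS
  have h0 : S 0 ∈ S '' Icc 0 T := mem_image_of_mem S ⟨le_rfl, hT⟩
  have hT' : S T ∈ S '' Icc 0 T := mem_image_of_mem S ⟨hT, le_rfl⟩
  exact ⟨le_of_not_gt fun h => hlb (hconn.Icc_subset hT' h0 ⟨h.le, hl⟩),
    le_of_not_gt fun h => hub (hconn.Icc_subset h0 hT' ⟨hu, h.le⟩)⟩

end Path

noncomputable def staticHedge (K₁ K₂ lb ub s₀ x : ℝ) : ℝ :=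
  (1 / (K₁ - lb)) * max (x - K₁) 0
    + (1 / (ub - K₂)) * max (K₂ - x) 0
    + (((K₁ - lb) - (ub - K₂)) / ((K₁ - lb) * (ub - K₂))) * (x - s₀)
    + ((lb * ub - K₁ * K₂) / ((K₁ - lb) * (ub - K₂))
        + (((K₁ - lb) - (ub - K₂)) / ((K₁ - lb) * (ub - K₂))) * s₀)

section StaticHedge

variable {K₁ K₂ lb ub : ℝ} (hl : K₂ < lb) (hlu : lb < ub) (hu : ub < K₁) (s₀ : ℝ)
include hl hlu hu

lemma staticHedge_nonneg {x : ℝ} (hx : x ∈ Icc lb ub) : 0 ≤ staticHedge K₁ K₂ lb ub s₀ x := by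
  have ha : 0 < K₁ - lb := by linarith
  have hc : 0 < ub - K₂ := by linarith
  -- the numerator is linear in `x` and positive at both endpoints `lb` and `ub`
  have hnum : 0 ≤ (K₁ - x) * (ub - K₂) + (x - ub) * (K₁ - lb) := by
    refine nonneg_of_mul_nonneg_right (a := ub - lb) ?_ (sub_pos.2 hlu)
    calc (0 : ℝ) ≤ (ub - x) * (K₁ - lb) * (lb - K₂) + (x - lb) * (K₁ - ub) * (ub - K₂) := by
          have hxu : 0 ≤ ub - x := sub_nonneg.2 hx.2
          have hxl : 0 ≤ x - lb := sub_nonneg.2 hx.1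
          have := mul_nonneg (mul_nonneg hxu ha.le) (sub_pos.2 hl).le
          have := mul_nonneg (mul_nonneg hxl (sub_pos.2 hu).le) hc.le
          linarith
      _ = (ub - lb) * ((K₁ - x) * (ub - K₂) + (x - ub) * (K₁ - lb)) := by ring
  calc (0 : ℝ) ≤ max (x - K₁) 0 / (K₁ - lb) + max (K₂ - x) 0 / (ub - K₂)
        + ((K₁ - x) * (ub - K₂) + (x - ub) * (K₁ - lb)) / ((K₁ - lb) * (ub - K₂)) := by
        positivity
    _ = staticHedge K₁ K₂ lb ub s₀ x := by
        unfold staticHedge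
        field_simp
        ring

lemma staticHedge_sub_nonneg (x : ℝ) :
    0 ≤ staticHedge K₁ K₂ lb ub s₀ x - 1 / (ub - K₂) * (x - ub) := by
  have ha : 0 < K₁ - lb := by linarith
  have hc : 0 < ub - K₂ := by linarith
  calc (0 : ℝ) ≤ (max (x - K₁) 0 + (K₁ - x)) / (K₁ - lb) + max (K₂ - x) 0 / (ub - K₂) := by
        have := le_max_left (x - K₁) 0
        have : 0 ≤ max (x - K₁) 0 + (K₁ - x) := by linarith
        positivity
    _ = _ := by
        unfold staticHedge
        field_simp
        ring

lemma staticHedge_add_nonneg (x : ℝ) :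
    0 ≤ staticHedge K₁ K₂ lb ub s₀ x + 1 / (K₁ - lb) * (x - lb) := by
  have ha : 0 < K₁ - lb := by linarith
  have hc : 0 < ub - K₂ := by linarith
  calc (0 : ℝ) ≤ max (x - K₁) 0 / (K₁ - lb) + (max (K₂ - x) 0 + (x - K₂)) / (ub - K₂) := by
        have := le_max_left (K₂ - x) 0
        have : 0 ≤ max (K₂ - x) 0 + (x - K₂) := by linarith
        positivity
    _ = _ := by
        unfold staticHedge
        field_simp
        ring

lemma one_le_staticHedge_sub_add (x : ℝ) :
    1 ≤ staticHedge K₁ K₂ lb ub s₀ x - 1 / (ub - K₂) * (x - ub) + 1 / (K₁ - lb) * (x - lb) := by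
  have ha : 0 < K₁ - lb := by linarith
  have hc : 0 < ub - K₂ := by linarith
  calc (1 : ℝ) ≤ 1 + max (x - K₁) 0 / (K₁ - lb) + max (K₂ - x) 0 / (ub - K₂) := by
        have : 0 ≤ max (x - K₁) 0 / (K₁ - lb) + max (K₂ - x) 0 / (ub - K₂) := by positivity
        linarith
    _ = _ := by
        unfold staticHedge
        field_simp
        ring

lemma indicator_and_le_staticHedge {P Q : Prop} {x : ℝ} (hx : ¬P → ¬Q → x ∈ Icc lb ub) :
    (if P ∧ Q then (1 : ℝ) else 0) ≤ staticHedge K₁ K₂ lb ub s₀ x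
      - 1 / (ub - K₂) * ((x - ub) * if P then 1 else 0)
      + 1 / (K₁ - lb) * ((x - lb) * if Q then 1 else 0) := by
  by_cases hP : P <;> by_cases hQ : Q <;> simp only [hP, hQ, and_self, and_false, false_and,
    if_true, if_false, mul_one, mul_zero, sub_zero, add_zero]
  · exact one_le_staticHedge_sub_add hl hlu hu s₀ x
  · exact staticHedge_sub_nonneg hl hlu hu s₀ x
  · exact staticHedge_add_nonneg hl hlu hu s₀ x
  · exact staticHedge_nonneg hl hlu hu s₀ (hx hP hQ)

end StaticHedge

theorem stmt4_general (T lb ub K₁ K₂ : ℝ) (S : ℝ → ℝ)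
    (hT : 0 < T) (hcont : ContinuousOn S (Set.Icc 0 T))
    (h1 : K₂ < lb) (h2 : lb < S 0) (h3 : S 0 < ub) (h4 : ub < K₁) :
    (if ub ≤ sSup (S '' Set.Icc 0 T) ∧ sInf (S '' Set.Icc 0 T) ≤ lb
      then (1 : ℝ) else 0)
      ≤ (1 / (K₁ - lb)) * max (S T - K₁) 0
        + (1 / (ub - K₂)) * max (K₂ - S T) 0
        + (((K₁ - lb) - (ub - K₂)) / ((K₁ - lb) * (ub - K₂))) * (S T - S 0)
        + ((lb * ub - K₁ * K₂) / ((K₁ - lb) * (ub - K₂))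
            + (((K₁ - lb) - (ub - K₂)) / ((K₁ - lb) * (ub - K₂))) * S 0)
        - (1 / (ub - K₂)) * (S T - ub) *
          (if hitTime S T ub < min (hitTime S T lb) (ENNReal.ofReal T)
            then (1 : ℝ) else 0)
        + (1 / (K₁ - lb)) * (S T - lb) *
          (if hitTime S T lb < min (hitTime S T ub) (ENNReal.ofReal T)
            then (1 : ℝ) else 0)
        + (1 / (K₁ - lb)) * (S T - lb) *
          (if hitTime S T ub < hitTime S T lb ∧ hitTime S T lb ≤ ENNReal.ofReal T
            then (1 : ℝ) else 0)
        - (1 / (ub - K₂)) * (S T - ub) *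
          (if hitTime S T lb < hitTime S T ub ∧ hitTime S T ub ≤ ENNReal.ofReal T
            then (1 : ℝ) else 0) := by
  have hlu : lb < ub := h2.trans h3
  have hdouble : (if ub ≤ sSup (S '' Icc 0 T) ∧ sInf (S '' Icc 0 T) ≤ lb then (1 : ℝ) else 0)
      ≤ if ub ∈ S '' Icc 0 T ∧ lb ∈ S '' Icc 0 T then 1 else 0 := by
    split_ifs with hA hB hB
    · rfl
    · exact absurd ⟨mem_image_of_le_sSup hcont hT.le h3.le hA.1,
        mem_image_of_sInf_le hcont hT.le h2.le hA.2⟩ hB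
    · exact zero_le_one
    · rfl
  have hhedge := indicator_and_le_staticHedge h1 hlu h4 (S 0)
    (mem_Icc_of_notMem_image hcont hT.le h2.le h3.le)
  unfold staticHedge at hhedge
  linear_combination hdouble + hhedge + 1 / (ub - K₂) * sub_mul_hitTime_indicators hcont hlu.ne'
    - 1 / (K₁ - lb) * sub_mul_hitTime_indicators hcont hlu.ne

/-- Pathwise superhedging inequality H^IV for the double touch option. -/
theorem stmt4 (T lb ub K₁ K₂ : ℝ) (S : ℝ → ℝ)
    (hT : 0 < T) (hcont : ContinuousOn S (Set.Icc 0 T))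
    (h0 : 0 < K₂) (h1 : K₂ < lb) (h2 : lb < S 0) (h3 : S 0 < ub) (h4 : ub < K₁) :
    (if ub ≤ sSup (S '' Set.Icc 0 T) ∧ sInf (S '' Set.Icc 0 T) ≤ lb
      then (1 : ℝ) else 0)
      ≤ (1 / (K₁ - lb)) * max (S T - K₁) 0
        + (1 / (ub - K₂)) * max (K₂ - S T) 0
        + (((K₁ - lb) - (ub - K₂)) / ((K₁ - lb) * (ub - K₂))) * (S T - S 0)
        + ((lb * ub - K₁ * K₂) / ((K₁ - lb) * (ub - K₂))
            + (((K₁ - lb) - (ub - K₂)) / ((K₁ - lb) * (ub - K₂))) * S 0)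
        - (1 / (ub - K₂)) * (S T - ub) *
          (if hitTime S T ub < min (hitTime S T lb) (ENNReal.ofReal T)
            then (1 : ℝ) else 0)
        + (1 / (K₁ - lb)) * (S T - lb) *
          (if hitTime S T lb < min (hitTime S T ub) (ENNReal.ofReal T)
            then (1 : ℝ) else 0)
        + (1 / (K₁ - lb)) * (S T - lb) *
          (if hitTime S T ub < hitTime S T lb ∧ hitTime S T lb ≤ ENNReal.ofReal T
            then (1 : ℝ) else 0)
        - (1 / (ub - K₂)) * (S T - ub) *
          (if hitTime S T lb < hitTime S T ub ∧ hitTime S T ub ≤ ENNReal.ofReal T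
            then (1 : ℝ) else 0) :=
  stmt4_general T lb ub K₁ K₂ S hT hcont h1 h2 h3 h4
end

section
/- For the subhedge L^I, with 0 < K₂ < b̲ < S_0 < b̄ < K₁, the solution of the defining linear system is α₀ = (S_0(K₁+K₂−b̄−b̲) + b̄b̲ − K₁K₂)/((b̄−K₂)(K₁−b̲)), α₁ = (K₁+K₂−b̄−b̲)/((b̄−K₂)(K₁−b̲)), α₂ = 1/(b̄−K₂), α₃ = (b̄−K₂+K₁−b̲)/((b̄−K₂)(K₁−b̲)), K₃ = (b̄K₁−b̲K₂)/(b̄−K₂−b̲+K₁), γ₁ = (b̄−b̲)/(b̄−K₂), γ₂ = (b̄−b̲)/(K₁−b̲); and moreover the quantities α₂, α₃, γ₁, γ₂, α₃−α₂, α₂−α₁ and α₃−α₂+α₁ are all strictly positive. -/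
/-!
Subtracting suitable pairs of the equations pins down `α₂ (b̄ - K₂) = 1` and `α₁ + α₃ = 2 α₂`,
and the proportion defining `K₃` splits `b̄ - b̲` into `K₃ - b̲` and `b̄ - K₃` in the ratio
`(K₁ - b̲) : (b̄ - K₂)`. Feeding this into the second equation gives `(α₃ - α₂)(K₁ - b̲) = 1`.
Hence `α₂ = 1/(b̄ - K₂)`, `α₃ - α₂ = α₂ - α₁ = 1/(K₁ - b̲)`, `α₃ - α₂ + α₁ = α₂`, and every
closed form and every sign follows.
-/

namespace SubhedgeLI

variable {S₀ lb ub K₁ K₂ K₃ α₀ α₁ α₂ α₃ γ₁ γ₂ : ℝ}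

theorem α₂_mul_eq_one (e1 : 0 = α₀ + α₁ * (lb - S₀) - α₂ * (lb - K₂))
    (e3 : 1 = α₀ + α₁ * (K₂ - S₀) + (α₂ - α₁) * (K₂ - lb) - α₂ * (K₂ - ub)) :
    α₂ * (ub - K₂) = 1 := by
  linear_combination e1 - e3

theorem α₃_add_α₁ (hlu : lb ≠ ub)
    (e3 : 1 = α₀ + α₁ * (K₂ - S₀) + (α₂ - α₁) * (K₂ - lb) - α₂ * (K₂ - ub))
    (e4 : 1 = α₀ + α₁ * (K₂ - S₀) - (α₃ - α₂ + α₁) * (K₂ - ub) + (α₃ - α₂) * (K₂ - lb)) :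
    α₃ + α₁ = 2 * α₂ := by
  have h : (α₃ + α₁ - 2 * α₂) * (ub - lb) = 0 := by linear_combination e3 - e4
  linear_combination (mul_eq_zero.mp h).resolve_right (sub_ne_zero.mpr hlu.symm)

theorem K₃_mul_eq (hK₁ : K₁ - lb ≠ 0) (hK₂ : ub - K₂ ≠ 0)
    (e7 : (K₃ - lb) / (K₁ - lb) = (ub - K₃) / (ub - K₂)) :
    K₃ * (ub - K₂ - lb + K₁) = ub * K₁ - lb * K₂ := by
  rw [div_eq_div_iff hK₁ hK₂] at e7
  linear_combination e7

theorem α₃_sub_α₂_mul_eq_one (hlu : lb ≠ ub)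
    (e1 : 0 = α₀ + α₁ * (lb - S₀) - α₂ * (lb - K₂))
    (e2 : 0 = α₀ + α₁ * (ub - S₀) - α₂ * (ub - K₂) + α₃ * (K₃ - lb) - γ₁ + γ₂)
    (e5 : γ₁ = (K₃ - lb) * α₃) (e6 : γ₂ = (ub - K₃) * α₃)
    (hα₂ : α₂ * (ub - K₂) = 1) (hsum : α₃ + α₁ = 2 * α₂)
    (hK₃ : K₃ * (ub - K₂ - lb + K₁) = ub * K₁ - lb * K₂) :
    (α₃ - α₂) * (K₁ - lb) = 1 := by
  have h₂₁ : (α₃ - α₂) * (ub - lb) = (ub - K₃) * α₃ := by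
    linear_combination e2 - e1 - e5 + e6 + (ub - lb) * hsum
  -- `(b̄ - K₃)(b̄ - K₂ - b̲ + K₁) = (b̄ - b̲)(b̄ - K₂)`, so the factor `b̄ - b̲` cancels
  have hcancel : ((α₃ - α₂) * (ub - K₂ - lb + K₁) - (ub - K₂) * α₃) * (ub - lb) = 0 := by
    linear_combination (ub - K₂ - lb + K₁) * h₂₁ - α₃ * hK₃
  have h := (mul_eq_zero.mp hcancel).resolve_right (sub_ne_zero.mpr hlu.symm)
  linear_combination h + hα₂

theorem γ_eq_of_K₃_eq (ha : 0 < ub - K₂) (hc : 0 < K₁ - lb)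
    (hK₃ : K₃ = (ub * K₁ - lb * K₂) / (ub - K₂ - lb + K₁))
    (hα₃ : α₃ = 1 / (ub - K₂) + 1 / (K₁ - lb)) :
    (K₃ - lb) * α₃ = (ub - lb) / (ub - K₂) ∧ (ub - K₃) * α₃ = (ub - lb) / (K₁ - lb) := by
  have hD : ub - K₂ - lb + K₁ ≠ 0 := by linarith
  rw [hK₃, hα₃]
  constructor <;> field_simp <;> ring

end SubhedgeLI

open SubhedgeLI in
theorem stmt6_general (S₀ lb ub K₁ K₂ K₃ α₀ α₁ α₂ α₃ γ₁ γ₂ : ℝ)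
    (h1 : K₂ < lb) (h2 : lb < S₀) (h3 : S₀ < ub) (h4 : ub < K₁)
    (e1 : 0 = α₀ + α₁ * (lb - S₀) - α₂ * (lb - K₂))
    (e2 : 0 = α₀ + α₁ * (ub - S₀) - α₂ * (ub - K₂) + α₃ * (K₃ - lb) - γ₁ + γ₂)
    (e3 : 1 = α₀ + α₁ * (K₂ - S₀) + (α₂ - α₁) * (K₂ - lb) - α₂ * (K₂ - ub))
    (e4 : 1 = α₀ + α₁ * (K₂ - S₀) - (α₃ - α₂ + α₁) * (K₂ - ub) + (α₃ - α₂) * (K₂ - lb))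
    (e5 : γ₁ = (K₃ - lb) * α₃)
    (e6 : γ₂ = (ub - K₃) * α₃)
    (e7 : (K₃ - lb) / (K₁ - lb) = (ub - K₃) / (ub - K₂)) :
    α₀ = (S₀ * (K₁ + K₂ - ub - lb) + ub * lb - K₁ * K₂) / ((ub - K₂) * (K₁ - lb)) ∧
    α₁ = (K₁ + K₂ - ub - lb) / ((ub - K₂) * (K₁ - lb)) ∧
    α₂ = 1 / (ub - K₂) ∧
    α₃ = (ub - K₂ + K₁ - lb) / ((ub - K₂) * (K₁ - lb)) ∧
    K₃ = (ub * K₁ - lb * K₂) / (ub - K₂ - lb + K₁) ∧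
    γ₁ = (ub - lb) / (ub - K₂) ∧
    γ₂ = (ub - lb) / (K₁ - lb) ∧
    0 < α₂ ∧ 0 < α₃ ∧ 0 < γ₁ ∧ 0 < γ₂ ∧
    0 < α₃ - α₂ ∧ 0 < α₂ - α₁ ∧ 0 < α₃ - α₂ + α₁ := by
  have ha : 0 < ub - K₂ := by linarith
  have hc : 0 < K₁ - lb := by linarith
  have hlu : lb ≠ ub := by linarith
  have hD : ub - K₂ - lb + K₁ ≠ 0 := by linarith
  have hα₂ := α₂_mul_eq_one e1 e3
  have hsum := α₃_add_α₁ hlu e3 e4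
  have hK₃ := K₃_mul_eq hc.ne' ha.ne' e7
  have hα₃ := α₃_sub_α₂_mul_eq_one hlu e1 e2 e5 e6 hα₂ hsum hK₃
  have hα₂' : α₂ = 1 / (ub - K₂) := eq_div_of_mul_eq ha.ne' hα₂
  have hα₃α₂ : α₃ - α₂ = 1 / (K₁ - lb) := eq_div_of_mul_eq hc.ne' hα₃
  have hα₃' : α₃ = 1 / (ub - K₂) + 1 / (K₁ - lb) := by linear_combination hα₃α₂ + hα₂'
  have hα₁ : α₁ = 1 / (ub - K₂) - 1 / (K₁ - lb) := by
    linear_combination hsum - hα₃α₂ + hα₂'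
  have hK₃' : K₃ = (ub * K₁ - lb * K₂) / (ub - K₂ - lb + K₁) := eq_div_of_mul_eq hD hK₃
  obtain ⟨hγ₁, hγ₂⟩ := γ_eq_of_K₃_eq ha hc hK₃' hα₃'
  rw [← e5] at hγ₁
  rw [← e6] at hγ₂
  refine ⟨?_, ?_, hα₂', ?_, hK₃', hγ₁, hγ₂, ?_, ?_, ?_, ?_, ?_, ?_, ?_⟩
  · rw [show α₀ = α₂ * (lb - K₂) - α₁ * (lb - S₀) by linear_combination -e1, hα₂', hα₁]
    field_simp; ring
  · rw [hα₁]; field_simp; ring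
  · rw [hα₃']; field_simp; ring
  · rw [hα₂']; positivity
  · rw [hα₃']; positivity
  · rw [hγ₁]; exact div_pos (by linarith) ha
  · rw [hγ₂]; exact div_pos (by linarith) hc
  · rw [hα₃α₂]; positivity
  · rw [show α₂ - α₁ = α₃ - α₂ by linear_combination -hsum, hα₃α₂]; positivity
  · rw [show α₃ - α₂ + α₁ = α₂ by linear_combination hsum, hα₂']; positivity

/-- Solution of the linear system defining the subhedge L^I, together with
the positivity of the relevant coefficients. -/
theorem stmt6 (S₀ lb ub K₁ K₂ K₃ α₀ α₁ α₂ α₃ γ₁ γ₂ : ℝ)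
    (h0 : 0 < K₂) (h1 : K₂ < lb) (h2 : lb < S₀) (h3 : S₀ < ub) (h4 : ub < K₁)
    (e1 : 0 = α₀ + α₁ * (lb - S₀) - α₂ * (lb - K₂))
    (e2 : 0 = α₀ + α₁ * (ub - S₀) - α₂ * (ub - K₂) + α₃ * (K₃ - lb) - γ₁ + γ₂)
    (e3 : 1 = α₀ + α₁ * (K₂ - S₀) + (α₂ - α₁) * (K₂ - lb) - α₂ * (K₂ - ub))
    (e4 : 1 = α₀ + α₁ * (K₂ - S₀) - (α₃ - α₂ + α₁) * (K₂ - ub) + (α₃ - α₂) * (K₂ - lb))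
    (e5 : γ₁ = (K₃ - lb) * α₃)
    (e6 : γ₂ = (ub - K₃) * α₃)
    (e7 : (K₃ - lb) / (K₁ - lb) = (ub - K₃) / (ub - K₂)) :
    α₀ = (S₀ * (K₁ + K₂ - ub - lb) + ub * lb - K₁ * K₂) / ((ub - K₂) * (K₁ - lb)) ∧
    α₁ = (K₁ + K₂ - ub - lb) / ((ub - K₂) * (K₁ - lb)) ∧
    α₂ = 1 / (ub - K₂) ∧
    α₃ = (ub - K₂ + K₁ - lb) / ((ub - K₂) * (K₁ - lb)) ∧
    K₃ = (ub * K₁ - lb * K₂) / (ub - K₂ - lb + K₁) ∧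
    γ₁ = (ub - lb) / (ub - K₂) ∧
    γ₂ = (ub - lb) / (K₁ - lb) ∧
    0 < α₂ ∧ 0 < α₃ ∧ 0 < γ₁ ∧ 0 < γ₂ ∧
    0 < α₃ - α₂ ∧ 0 < α₂ - α₁ ∧ 0 < α₃ - α₂ + α₁ :=
  stmt6_general S₀ lb ub K₁ K₂ K₃ α₀ α₁ α₂ α₃ γ₁ γ₂ h1 h2 h3 h4 e1 e2 e3 e4 e5 e6 e7
end

section
/- Lemma 5.4: let μ be a probability measure on (0,∞) with positive density and mean S_0 ∈ (b̲,b̄), with ρ₋, ρ₊ defined by barycentre conditions. If b̄ ≥ ρ₋(0) and b̲ ≤ ρ₊(∞), then it is impossible that simultaneously there exist z₀ ≥ b̄ with μ_B((0,ρ₋(0)) ∪ (z₀,∞)) = b̄ (i.e. γ₋(z₀)=0) and w₀ ≤ b̲ with μ_B((0,w₀) ∪ (ρ₊(∞),∞)) = b̲ (i.e. γ₊(w₀)=∞). -/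
open MeasureTheory Set

/-!
Both barycentre conditions are balance equations: if `A` lies below `b` and `B` above it, then
`bary μ (A ∪ B) = b` says `∫_A (b - x) dμ = ∫_B (x - b) dμ`. Hence
  `∫_(0,ρ₋(0)) (b̄ - x) = ∫_(z₀,∞) (x - b̄) ≤ ∫_(ρ₊(∞),∞) (x - b̲)`
  `                    = ∫_(0,w₀) (b̲ - x) < ∫_(0,ρ₋(0)) (b̄ - x)`,
where the inequality uses `b̲ ≤ ρ₊(∞) < b̄ ≤ z₀`, and the strict one uses `w₀ ≤ b̲ < ρ₋(0) ≤ b̄`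
together with `μ (w₀, ρ₋(0)) > 0`.
-/

noncomputable def bary (μ : Measure ℝ) (Γ : Set ℝ) : ℝ :=
  (∫ u in Γ, u ∂μ) / (μ Γ).toReal

namespace Bary

variable {μ : Measure ℝ} [IsFiniteMeasure μ]

theorem setIntegral_sub_eq_zero_of_bary_eq {s : Set ℝ} {b : ℝ}
    (hint : Integrable (fun x : ℝ => x) μ) (hs : μ s ≠ 0) (hb : bary μ s = b) :
    ∫ x in s, (x - b) ∂μ = 0 := by
  have hμs : (μ s).toReal ≠ 0 := ENNReal.toReal_ne_zero.2 ⟨hs, measure_ne_top μ s⟩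
  rw [bary, div_eq_iff hμs] at hb
  rw [integral_sub hint.integrableOn (integrable_const b).integrableOn, setIntegral_const,
    smul_eq_mul, measureReal_def, hb, mul_comm, sub_self]

theorem setIntegral_sub_eq_of_bary_union_eq {A B : Set ℝ} {b : ℝ}
    (hint : Integrable (fun x : ℝ => x) μ) (hAB : Disjoint A B) (hB : MeasurableSet B)
    (hne : μ (A ∪ B) ≠ 0) (hb : bary μ (A ∪ B) = b) :
    ∫ x in A, (b - x) ∂μ = ∫ x in B, (x - b) ∂μ := by
  have hfi : Integrable (fun x => x - b) μ := hint.sub (integrable_const b)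
  have h := setIntegral_sub_eq_zero_of_bary_eq hint hne hb
  rw [setIntegral_union hAB hB hfi.integrableOn hfi.integrableOn] at h
  have hneg : ∫ x in A, (b - x) ∂μ = -∫ x in A, (x - b) ∂μ := by
    rw [← integral_neg]; simp only [neg_sub]
  linarith

theorem setIntegral_Ioi_sub_le {lb ub a z : ℝ} (hint : Integrable (fun x : ℝ => x) μ)
    (hlu : lb ≤ ub) (haz : a ≤ z) (hla : lb ≤ a) :
    ∫ x in Ioi z, (x - ub) ∂μ ≤ ∫ x in Ioi a, (x - lb) ∂μ := by
  have hlbi : Integrable (fun x => x - lb) μ := hint.sub (integrable_const lb)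
  calc ∫ x in Ioi z, (x - ub) ∂μ ≤ ∫ x in Ioi z, (x - lb) ∂μ :=
        setIntegral_mono_on (hint.sub (integrable_const ub)).integrableOn hlbi.integrableOn
          measurableSet_Ioi fun x _ => by linarith
    _ ≤ ∫ x in Ioi a, (x - lb) ∂μ :=
        setIntegral_mono_set hlbi.integrableOn
          (ae_restrict_of_forall_mem measurableSet_Ioi fun x (hx : a < x) => by
            show 0 ≤ x - lb; linarith)
          (Ioi_subset_Ioi haz).eventuallyLE

theorem setIntegral_Ioo_const_sub_pos {w ρ ub : ℝ} (hint : Integrable (fun x : ℝ => x) μ)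
    (hρ : ρ ≤ ub) (hpos : 0 < μ (Ioo w ρ)) : 0 < ∫ x in Ioo w ρ, (ub - x) ∂μ := by
  have hubi : Integrable (fun x => ub - x) μ := (integrable_const ub).sub hint
  rw [setIntegral_pos_iff_support_of_nonneg_ae
    (ae_restrict_of_forall_mem measurableSet_Ioo fun x hx => by
      show 0 ≤ ub - x; linarith [hx.2])
    hubi.integrableOn]
  refine hpos.trans_le (measure_mono fun x hx => ⟨?_, hx⟩)
  exact sub_ne_zero.2 (by linarith [hx.2])

theorem setIntegral_Ioo_sub_lt {lb ub a w ρ : ℝ} (hint : Integrable (fun x : ℝ => x) μ)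
    (hlu : lb ≤ ub) (haw : a ≤ w) (hρ : ρ ≤ ub) (hpos : 0 < μ (Ioo w ρ)) :
    ∫ x in Ioo a w, (lb - x) ∂μ < ∫ x in Ioo a ρ, (ub - x) ∂μ := by
  have hwρ : w < ρ := by
    by_contra! h
    simp [Ioo_eq_empty_of_le h] at hpos
  have hubi : Integrable (fun x => ub - x) μ := (integrable_const ub).sub hint
  calc ∫ x in Ioo a w, (lb - x) ∂μ ≤ ∫ x in Ioo a w, (ub - x) ∂μ :=
        setIntegral_mono_on ((integrable_const lb).sub hint).integrableOn hubi.integrableOn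
          measurableSet_Ioo fun x _ => by linarith
    _ < ∫ x in Ioo a w, (ub - x) ∂μ + ∫ x in Ioo w ρ, (ub - x) ∂μ :=
        lt_add_of_pos_right _ (setIntegral_Ioo_const_sub_pos hint hρ hpos)
    _ = ∫ x in Ioo a w ∪ Ioo w ρ, (ub - x) ∂μ :=
        (setIntegral_union
          ((Iio_disjoint_Ioi_of_le le_rfl).mono Ioo_subset_Iio_self Ioo_subset_Ioi_self)
          measurableSet_Ioo hubi.integrableOn hubi.integrableOn).symm
    _ ≤ ∫ x in Ioo a ρ, (ub - x) ∂μ := by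
        refine setIntegral_mono_set hubi.integrableOn
          (ae_restrict_of_forall_mem measurableSet_Ioo fun x hx => ?_) ?_
        · show 0 ≤ ub - x; linarith [hx.2]
        · exact (union_subset (Ioo_subset_Ioo_right hwρ.le)
            (Ioo_subset_Ioo_left haw)).eventuallyLE

end Bary

open Bary in
theorem stmt9_general (μ : Measure ℝ) [IsProbabilityMeasure μ]
    (hdens : ∀ a b : ℝ, 0 ≤ a → a < b → 0 < μ (Set.Ioo a b))
    (hint : Integrable id μ)
    (lb ub : ℝ)
    (ρm0 ρpInf : ℝ)
    (hρm0 : lb < ρm0 ∧ bary μ (Set.Icc 0 ρm0) = lb)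
    (hρpInf : 0 < ρpInf ∧ ρpInf < ub ∧ bary μ (Set.Ici ρpInf) = ub)
    (hA : ρm0 ≤ ub) (hB : lb ≤ ρpInf) :
    ¬ ((∃ z₀, ub ≤ z₀ ∧ bary μ (Set.Ioo 0 ρm0 ∪ Set.Ioi z₀) = ub) ∧
       (∃ w₀, 0 ≤ w₀ ∧ w₀ ≤ lb ∧
         bary μ (Set.Ioo 0 w₀ ∪ Set.Ioi ρpInf) = lb)) := by
  rintro ⟨⟨z₀, hz₀, hγm⟩, w₀, hw₀, hw₀lb, hγp⟩
  obtain ⟨hρp, hρpub, -⟩ := hρpInf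
  have hw₀ρ : w₀ < ρm0 := hw₀lb.trans_lt hρm0.1
  have hpos : 0 < μ (Ioo w₀ ρm0) := hdens w₀ ρm0 hw₀ hw₀ρ
  have hbal_m : ∫ x in Ioo 0 ρm0, (ub - x) ∂μ = ∫ x in Ioi z₀, (x - ub) ∂μ :=
    setIntegral_sub_eq_of_bary_union_eq hint
      ((Iio_disjoint_Ioi_of_le (hA.trans hz₀)).mono_left Ioo_subset_Iio_self) measurableSet_Ioi
      (hpos.trans_le (measure_mono ((Ioo_subset_Ioo_left hw₀).trans subset_union_left))).ne' hγm
  have hbal_p : ∫ x in Ioo 0 w₀, (lb - x) ∂μ = ∫ x in Ioi ρpInf, (x - lb) ∂μ :=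
    setIntegral_sub_eq_of_bary_union_eq hint
      ((Iio_disjoint_Ioi_of_le (hw₀lb.trans hB)).mono_left Ioo_subset_Iio_self) measurableSet_Ioi
      ((hdens ρpInf (ρpInf + 1) hρp.le (lt_add_one _)).trans_le
        (measure_mono (Ioo_subset_Ioi_self.trans subset_union_right))).ne' hγp
  have hlu : lb ≤ ub := hB.trans hρpub.le
  have htail := setIntegral_Ioi_sub_le hint hlu (hρpub.le.trans hz₀) hB
  have hhead := setIntegral_Ioo_sub_lt hint hlu hw₀ hA hpos
  linarith

/-- Lemma 5.4: if `b̄ ≥ ρ₋(0)` and `b̲ ≤ ρ₊(∞)` then one cannot have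
simultaneously `γ₋(z₀) = 0` for some `z₀ ≥ b̄` and `γ₊(w₀) = ∞` for some
`w₀ ≤ b̲`. -/
theorem stmt9 (μ : Measure ℝ) [IsProbabilityMeasure μ]
    (hsupp : μ (Set.Iic 0) = 0)
    (hdens : ∀ a b : ℝ, 0 ≤ a → a < b → 0 < μ (Set.Ioo a b))
    (hint : Integrable id μ)
    (S₀ lb ub : ℝ) (hmean : ∫ u, u ∂μ = S₀)
    (h0 : 0 < lb) (h1 : lb < S₀) (h2 : S₀ < ub)
    (ρm0 ρpInf : ℝ)
    (hρm0 : lb < ρm0 ∧ bary μ (Set.Icc 0 ρm0) = lb)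
    (hρpInf : 0 < ρpInf ∧ ρpInf < ub ∧ bary μ (Set.Ici ρpInf) = ub)
    (hA : ρm0 ≤ ub) (hB : lb ≤ ρpInf) :
    ¬ ((∃ z₀, ub ≤ z₀ ∧ bary μ (Set.Ioo 0 ρm0 ∪ Set.Ioi z₀) = ub) ∧
       (∃ w₀, 0 ≤ w₀ ∧ w₀ ≤ lb ∧
         bary μ (Set.Ioo 0 w₀ ∪ Set.Ioi ρpInf) = lb)) :=
  stmt9_general μ hdens hint lb ub ρm0 ρpInf hρm0 hρpInf hA hB
end

section
/- Mass bound in case IV of Theorem 3.2: let μ be a probability measure on (0,∞) with positive density, mean S_0 ∈ (b̲,b̄), and suppose b̄ < ρ₋(0). Then μ((ρ₋(0),∞)) ≤ (S_0−b̲)/(b̄−b̲). -/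
open MeasureTheory Set

theorem bary_congr {μ : Measure ℝ} {s t : Set ℝ} (hst : s =ᵐ[μ] t) : bary μ s = bary μ t := by
  rw [bary, bary, setIntegral_congr_set hst, measure_congr hst]

/-- A nonzero barycenter rules out the junk value of the division by a null mass. -/
theorem setIntegral_id_eq_bary_mul {μ : Measure ℝ} {s : Set ℝ} (h : bary μ s ≠ 0) :
    ∫ u in s, u ∂μ = bary μ s * μ.real s := by
  have hs : μ.real s ≠ 0 := fun hs ↦ h (by rw [bary, ← measureReal_def, hs, div_zero])
  rw [bary, ← measureReal_def, div_mul_cancel₀ _ hs]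

theorem Iic_ae_eq_Icc_of_measure_Iic_zero {μ : Measure ℝ} (h : μ (Iic 0) = 0) (r : ℝ) :
    Iic r =ᵐ[μ] Icc 0 r := by
  refine ae_eq_set.mpr ⟨measure_mono_null ?_ h, ?_⟩
  · exact fun u ⟨hur, hu⟩ ↦ not_lt.mp fun hpos ↦ hu ⟨hpos.le, hur⟩
  · rw [sdiff_eq_empty.mpr Icc_subset_Iic_self, measure_empty]

theorem add_sub_mul_measureReal_compl_le_integral {α : Type*} [MeasurableSpace α]
    {μ : Measure α} [IsProbabilityMeasure μ] {f : α → ℝ} {s : Set α} {b c : ℝ}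
    (hs : MeasurableSet s) (hf : Integrable f μ) (hb : ∫ x in s, f x ∂μ = b * μ.real s)
    (hc : ∀ x ∈ sᶜ, c ≤ f x) :
    b + (c - b) * μ.real sᶜ ≤ ∫ x, f x ∂μ := by
  have htail : c * μ.real sᶜ ≤ ∫ x in sᶜ, f x ∂μ :=
    setIntegral_ge_of_const_le_real hs.compl (measure_ne_top μ _) hc hf.integrableOn
  rw [← integral_add_compl hs hf, hb, probReal_compl_eq_one_sub hs] at *
  linarith

theorem stmt12_general (μ : Measure ℝ) [IsProbabilityMeasure μ]
    (hsupp : μ (Set.Iic 0) = 0)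
    (hint : Integrable id μ)
    (S₀ lb ub r₀ : ℝ) (hmean : ∫ u, u ∂μ = S₀)
    (h0 : 0 < lb) (h1 : lb < S₀) (h2 : S₀ < ub)
    (hr₀ : bary μ (Set.Icc 0 r₀) = lb)
    (hub : ub < r₀) :
    (μ (Set.Ioi r₀)).toReal ≤ (S₀ - lb) / (ub - lb) := by
  have hbar : bary μ (Iic r₀) = lb :=
    (bary_congr (Iic_ae_eq_Icc_of_measure_Iic_zero hsupp r₀)).trans hr₀
  have hI : ∫ u in Iic r₀, u ∂μ = lb * μ.real (Iic r₀) :=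
    hbar ▸ setIntegral_id_eq_bary_mul (hbar ▸ h0.ne')
  have hlower := add_sub_mul_measureReal_compl_le_integral (f := fun u ↦ u) measurableSet_Iic hint hI
    (fun u hu ↦ (hub.trans (not_le.mp hu)).le)
  rw [compl_Iic, hmean] at hlower
  rw [← measureReal_def, le_div_iff₀ (by linarith)]
  linarith

/-- Mass bound in case IV of Theorem 3.2:
if `b̄ < ρ₋(0)` then `μ((ρ₋(0),∞)) ≤ (S₀ − b̲)/(b̄ − b̲)`. -/
theorem stmt12 (μ : Measure ℝ) [IsProbabilityMeasure μ]
    (hsupp : μ (Set.Iic 0) = 0)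
    (hdens : ∀ a b : ℝ, 0 ≤ a → a < b → 0 < μ (Set.Ioo a b))
    (hint : Integrable id μ)
    (S₀ lb ub r₀ : ℝ) (hmean : ∫ u, u ∂μ = S₀)
    (h0 : 0 < lb) (h1 : lb < S₀) (h2 : S₀ < ub)
    (hr₀ : bary μ (Set.Icc 0 r₀) = lb)
    (hub : ub < r₀) :
    (μ (Set.Ioi r₀)).toReal ≤ (S₀ - lb) / (ub - lb) :=
  stmt12_general μ hsupp hint S₀ lb ub r₀ hmean h0 h1 h2 hr₀ hub
end

section
/- Barycentre identity in case IV: let μ be a probability measure on (0,∞) with positive density, mean S_0 ∈ (b̲,b̄), and b̄ < ρ₋(0) where μ_B([0,ρ₋(0)]) = b̲. Then the measure ν¹ = [(S_0−b̲)/(b̄−b̲) − μ((ρ₋(0),∞))]·δ_{b̲} + μ|_(ρ₋(0),∞) has barycentre b̄, i.e. ∫ u ν¹(du) = b̄·ν¹(ℝ₊). -/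
open MeasureTheory Set

/-! Since `μ` does not charge `(-∞, 0]`, the lower part `μ|_[0,ρ₋(0)]` is the complement of the
tail `μ|_(ρ₋(0),∞)`. It has some mass `m` and barycentre `b̲`, so the tail has mass `1 - m` and
first moment `S₀ - b̲ m`, and the barycentre identity reduces to the linear relation
`S₀ - b̲ = (b̄ - b̲) · (S₀ - b̲)/(b̄ - b̲)`. -/

theorem Iic_ae_eq_Icc_of_measure_Iio {α : Type*} [MeasurableSpace α] [LinearOrder α]
    {μ : Measure α} {a : α} (ha : μ (Iio a) = 0) (b : α) : Iic b =ᵐ[μ] Icc a b := by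
  rw [Filter.eventuallyEq_set]
  filter_upwards [measure_eq_zero_iff_ae_notMem.mp ha] with x hx
  simp only [mem_Iio, not_lt] at hx
  exact ⟨fun hxb => ⟨hx, hxb⟩, And.right⟩

/-- Where `bary` is a nonzero number, the mass it divides by cannot be the junk value `0`. -/
theorem setIntegral_id_eq_mul_of_bary_eq {μ : Measure ℝ} {Γ : Set ℝ} {c : ℝ}
    (hc : c ≠ 0) (h : bary μ Γ = c) : ∫ u in Γ, u ∂μ = c * μ.real Γ := by
  have hmass : μ.real Γ ≠ 0 := by
    intro h0
    rw [bary, ← measureReal_def, h0, div_zero] at h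
    exact hc h.symm
  rw [← h, bary, ← measureReal_def, div_mul_cancel₀ _ hmass]

theorem setIntegral_Ioi_id_eq_sub {μ : Measure ℝ} (hint : Integrable id μ) (r : ℝ) :
    ∫ u in Ioi r, u ∂μ = (∫ u, u ∂μ) - ∫ u in Iic r, u ∂μ := by
  have hsplit := integral_add_compl (s := Iic r) measurableSet_Iic hint
  rw [compl_Iic] at hsplit
  exact eq_sub_of_add_eq' hsplit

theorem stmt13_general (μ : Measure ℝ) [IsProbabilityMeasure μ]
    (hsupp : μ (Set.Iic 0) = 0)
    (hint : Integrable id μ)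
    (S₀ lb ub r₀ : ℝ) (hmean : ∫ u, u ∂μ = S₀)
    (h0 : 0 < lb) (h1 : lb < S₀) (h2 : S₀ < ub)
    (hr₀ : bary μ (Set.Icc 0 r₀) = lb) :
    (∫ u in Set.Ioi r₀, u ∂μ)
      + lb * ((S₀ - lb) / (ub - lb) - (μ (Set.Ioi r₀)).toReal)
      = ub * ((S₀ - lb) / (ub - lb)) := by
  have hlow : Iic r₀ =ᵐ[μ] Icc 0 r₀ :=
    Iic_ae_eq_Icc_of_measure_Iio (measure_mono_null Iio_subset_Iic_self hsupp) r₀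
  have hIic : ∫ u in Iic r₀, u ∂μ = lb * μ.real (Iic r₀) := by
    rw [setIntegral_congr_set hlow, measureReal_congr hlow]
    exact setIntegral_id_eq_mul_of_bary_eq h0.ne' hr₀
  have hIoi : ∫ u in Ioi r₀, u ∂μ = S₀ - lb * μ.real (Iic r₀) := by
    rw [setIntegral_Ioi_id_eq_sub hint, hmean, hIic]
  have hmass : (μ (Ioi r₀)).toReal = 1 - μ.real (Iic r₀) := by
    rw [← measureReal_def, ← compl_Iic, probReal_compl_eq_one_sub measurableSet_Iic]
  rw [hIoi, hmass]
  field_simp [sub_ne_zero.mpr (h1.trans h2).ne']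
  ring

/-- Barycentre identity in case IV of Theorem 3.2: the measure
`ν¹ = [(S₀−b̲)/(b̄−b̲) − μ((ρ₋(0),∞))]·δ_{b̲} + μ|_(ρ₋(0),∞)`
has barycentre `b̄`. -/
theorem stmt13 (μ : Measure ℝ) [IsProbabilityMeasure μ]
    (hsupp : μ (Set.Iic 0) = 0)
    (hdens : ∀ a b : ℝ, 0 ≤ a → a < b → 0 < μ (Set.Ioo a b))
    (hint : Integrable id μ)
    (S₀ lb ub r₀ : ℝ) (hmean : ∫ u, u ∂μ = S₀)
    (h0 : 0 < lb) (h1 : lb < S₀) (h2 : S₀ < ub)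
    (hr₀ : bary μ (Set.Icc 0 r₀) = lb)
    (hub : ub < r₀) :
    (∫ u in Set.Ioi r₀, u ∂μ)
      + lb * ((S₀ - lb) / (ub - lb) - (μ (Set.Ioi r₀)).toReal)
      = ub * ((S₀ - lb) / (ub - lb)) :=
  stmt13_general μ hsupp hint S₀ lb ub r₀ hmean h0 h1 h2 hr₀
end

section
/- Sufficient mass at b̲ in case IV: let μ be a probability measure on (0,∞) with positive density, mean S_0 ∈ (b̲,b̄), and suppose b̄ < ρ₋(0), b̲ > ρ₊(∞) and ρ₊(ρ₋(0)) < ρ₋(ρ₊(∞)). Then (S_0−b̲)/(b̄−b̲) − μ((ρ₋(0),∞)) ≥ μ((ρ₊(∞), ρ₊(ρ₋(0)))). -/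
open MeasureTheory Set

/-!
Work with the excess `∫ u in S, (u - c) ∂μ`, which vanishes when `S` has barycentre `c` and is
additive in `S`. The mean condition and `bary μ [0, ρ₋(0)] = b̲` give
`∫ u in (ρ₋(0), ∞), (u - b̲) ∂μ = S₀ - b̲`. If `ρ₊(∞) < ρ₊(ρ₋(0))`, splitting `[ρ₊(∞), ∞)` at
`ρ₊(ρ₋(0))` and `ρ₋(0)` shows that the excess over `b̄` of `E = [ρ₊(∞), ρ₊(ρ₋(0)))` and of the
tail `(ρ₋(0), ∞)` add up to zero; and `E`, being the left part of `[ρ₊(∞), ρ₋(ρ₊(∞))]` whose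
barycentre is `b̲`, has barycentre at most `b̲`. Shifting the centre from `b̄` to `b̲` then yields
`(b̄ - b̲) (μ E + μ (ρ₋(0), ∞)) ≤ S₀ - b̲`. Otherwise `E` is empty and the same bound for the
tail alone holds because the tail lies above `ρ₋(0) > b̄`.
-/

section Excess

variable {μ : Measure ℝ} [IsFiniteMeasure μ]

lemma integrableOn_sub_const (hint : Integrable id μ) (S : Set ℝ) (c : ℝ) :
    IntegrableOn (fun u => u - c) S μ :=
  (hint.sub (integrable_const c)).integrableOn

lemma setIntegral_sub_const (hint : Integrable id μ) (S : Set ℝ) (c : ℝ) :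
    ∫ u in S, (u - c) ∂μ = (∫ u in S, u ∂μ) - c * μ.real S := by
  rw [integral_sub (f := fun u => u) hint.integrableOn (integrable_const c), setIntegral_const,
    smul_eq_mul, mul_comm]

lemma setIntegral_sub_const_eq_add (hint : Integrable id μ) (S : Set ℝ) (c d : ℝ) :
    ∫ u in S, (u - c) ∂μ = ∫ u in S, (u - d) ∂μ + (d - c) * μ.real S := by
  rw [setIntegral_sub_const hint, setIntegral_sub_const hint]
  ring

lemma setIntegral_sub_const_eq_zero_of_bary_eq (hint : Integrable id μ) {S : Set ℝ} {c : ℝ}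
    (h : bary μ S = c) (hc : c ≠ 0) : ∫ u in S, (u - c) ∂μ = 0 := by
  have hS : μ.real S ≠ 0 := by
    rintro hS
    rw [bary, ← measureReal_def, hS, div_zero] at h
    exact hc h.symm
  rw [bary, ← measureReal_def, div_eq_iff hS] at h
  rw [setIntegral_sub_const hint, h, sub_self]

lemma setIntegral_sub_const_union (hint : Integrable id μ) {A B : Set ℝ} (hAB : Disjoint A B)
    (hB : MeasurableSet B) (c : ℝ) :
    ∫ u in A ∪ B, (u - c) ∂μ = ∫ u in A, (u - c) ∂μ + ∫ u in B, (u - c) ∂μ :=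
  setIntegral_union hAB hB (integrableOn_sub_const hint A c) (integrableOn_sub_const hint B c)

lemma setIntegral_Ico_sub_const_nonpos (hint : Integrable id μ) {a p m c : ℝ} (hap : a ≤ p)
    (hpm : p ≤ m) (h : ∫ u in Icc a m, (u - c) ∂μ = 0) : ∫ u in Ico a p, (u - c) ∂μ ≤ 0 := by
  rcases le_or_gt p c with hpc | hcp
  · exact setIntegral_nonpos measurableSet_Ico fun u hu => by linarith [hu.2]
  · have hsplit : ∫ u in Ico a p ∪ Icc p m, (u - c) ∂μ
        = ∫ u in Ico a p, (u - c) ∂μ + ∫ u in Icc p m, (u - c) ∂μ :=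
      setIntegral_sub_const_union hint
        ((Iio_disjoint_Ici le_rfl).mono Ico_subset_Iio_self Icc_subset_Ici_self) measurableSet_Icc c
    have hright : 0 ≤ ∫ u in Icc p m, (u - c) ∂μ :=
      setIntegral_nonneg measurableSet_Icc fun u hu => by linarith [hu.1]
    rw [Ico_union_Icc_eq_Icc hap hpm, h] at hsplit
    linarith

lemma mul_measureReal_Ioi_le_setIntegral (hint : Integrable id μ) {r c d : ℝ} (hdr : d ≤ r) :
    (d - c) * μ.real (Ioi r) ≤ ∫ u in Ioi r, (u - c) ∂μ := by
  have hexcess : 0 ≤ ∫ u in Ioi r, (u - d) ∂μ :=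
    setIntegral_nonneg measurableSet_Ioi fun u hu => by linarith [mem_Ioi.1 hu]
  rw [setIntegral_sub_const_eq_add hint _ c d]
  linarith

lemma mul_measureReal_add_le_setIntegral_Ioi (hint : Integrable id μ) {a p r c d : ℝ}
    (hap : a ≤ p) (hpr : p ≤ r) (hA : ∫ u in Ici a, (u - d) ∂μ = 0)
    (hP : ∫ u in Icc p r, (u - d) ∂μ = 0) (hE : ∫ u in Ico a p, (u - c) ∂μ ≤ 0) :
    (d - c) * (μ.real (Ico a p) + μ.real (Ioi r)) ≤ ∫ u in Ioi r, (u - c) ∂μ := by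
  rw [← Ico_union_Ici_eq_Ici hap, setIntegral_sub_const_union hint
      ((Iio_disjoint_Ici le_rfl).mono_left Ico_subset_Iio_self) measurableSet_Ici,
    ← Icc_union_Ioi_eq_Ici hpr, setIntegral_sub_const_union hint
      ((Iic_disjoint_Ioi le_rfl).mono_left Icc_subset_Iic_self) measurableSet_Ioi, hP] at hA
  rw [setIntegral_sub_const_eq_add hint _ c d]
  rw [setIntegral_sub_const_eq_add hint _ c d] at hE
  linarith

end Excess

lemma setIntegral_Ioi_sub_const_eq (μ : Measure ℝ) [IsProbabilityMeasure μ]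
    (hsupp : μ (Iic 0) = 0) (hint : Integrable id μ) {S₀ c r : ℝ} (hmean : ∫ u, u ∂μ = S₀)
    (hr : 0 ≤ r) (h : ∫ u in Icc 0 r, (u - c) ∂μ = 0) : ∫ u in Ioi r, (u - c) ∂μ = S₀ - c := by
  have hnull : ∀ᵐ u ∂μ, u ∈ Ici (0 : ℝ) :=
    measure_mono_null (fun u hu => (not_le.1 (mt mem_Ici.2 hu)).le) hsupp
  have htotal : ∫ u, (u - c) ∂μ = S₀ - c := by
    rw [integral_sub (f := fun u => u) hint (integrable_const c), hmean, integral_const,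
      probReal_univ, one_smul]
  have hsplit : ∫ u in Ici 0, (u - c) ∂μ = ∫ u, (u - c) ∂μ := by
    rw [Measure.restrict_eq_self_of_ae_mem hnull]
  rwa [htotal, ← Icc_union_Ioi_eq_Ici hr, setIntegral_sub_const_union hint
    ((Iic_disjoint_Ioi le_rfl).mono_left Icc_subset_Iic_self) measurableSet_Ioi, h, zero_add]
    at hsplit

theorem stmt14_general (μ : Measure ℝ) [IsProbabilityMeasure μ]
    (hsupp : μ (Set.Iic 0) = 0)
    (hint : Integrable id μ)
    (S₀ lb ub r₀ ρpInf ρpr₀ ρmρpInf : ℝ) (hmean : ∫ u, u ∂μ = S₀)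
    (h0 : 0 < lb) (h1 : lb < S₀) (h2 : S₀ < ub)
    (hr₀ : bary μ (Set.Icc 0 r₀) = lb)
    (hρpInf : 0 ≤ ρpInf ∧ bary μ (Set.Ici ρpInf) = ub)
    (hρpr₀ : 0 ≤ ρpr₀ ∧ ρpr₀ ≤ r₀ ∧ bary μ (Set.Icc ρpr₀ r₀) = ub)
    (hρmρpInf : ρpInf ≤ ρmρpInf ∧ bary μ (Set.Icc ρpInf ρmρpInf) = lb)
    (hc1 : ub < r₀) (hc3 : ρpr₀ < ρmρpInf) :
    (μ (Set.Ioo ρpInf ρpr₀)).toReal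
      ≤ (S₀ - lb) / (ub - lb) - (μ (Set.Ioi r₀)).toReal := by
  obtain ⟨-, hbB⟩ := hρpInf
  obtain ⟨-, hpr, hbC⟩ := hρpr₀
  obtain ⟨-, hbD⟩ := hρmρpInf
  have hub : ub ≠ 0 := by linarith
  have htail : ∫ u in Ioi r₀, (u - lb) ∂μ = S₀ - lb :=
    setIntegral_Ioi_sub_const_eq μ hsupp hint hmean (by linarith)
      (setIntegral_sub_const_eq_zero_of_bary_eq hint hr₀ h0.ne')
  rw [le_sub_iff_add_le, le_div_iff₀ (by linarith), ← htail, mul_comm, ← measureReal_def,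
    ← measureReal_def]
  rcases le_or_gt ρpInf ρpr₀ with hap | hpa
  · calc (ub - lb) * (μ.real (Ioo ρpInf ρpr₀) + μ.real (Ioi r₀))
        ≤ (ub - lb) * (μ.real (Ico ρpInf ρpr₀) + μ.real (Ioi r₀)) :=
          mul_le_mul_of_nonneg_left (add_le_add_left (measureReal_mono Ioo_subset_Ico_self) _)
            (by linarith)
      _ ≤ ∫ u in Ioi r₀, (u - lb) ∂μ :=
          mul_measureReal_add_le_setIntegral_Ioi hint hap hpr
            (setIntegral_sub_const_eq_zero_of_bary_eq hint hbB hub)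
            (setIntegral_sub_const_eq_zero_of_bary_eq hint hbC hub)
            (setIntegral_Ico_sub_const_nonpos hint hap hc3.le
              (setIntegral_sub_const_eq_zero_of_bary_eq hint hbD h0.ne'))
  · rw [Ioo_eq_empty_of_le hpa.le, measureReal_empty, zero_add]
    exact mul_measureReal_Ioi_le_setIntegral hint hc1.le

/-- Sufficient mass at `b̲` in case IV of Theorem 3.2:
`(S₀−b̲)/(b̄−b̲) − μ((ρ₋(0),∞)) ≥ μ((ρ₊(∞), ρ₊(ρ₋(0))))`. -/
theorem stmt14 (μ : Measure ℝ) [IsProbabilityMeasure μ]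
    (hsupp : μ (Set.Iic 0) = 0)
    (hdens : ∀ a b : ℝ, 0 ≤ a → a < b → 0 < μ (Set.Ioo a b))
    (hint : Integrable id μ)
    (S₀ lb ub r₀ ρpInf ρpr₀ ρmρpInf : ℝ) (hmean : ∫ u, u ∂μ = S₀)
    (h0 : 0 < lb) (h1 : lb < S₀) (h2 : S₀ < ub)
    (hr₀ : bary μ (Set.Icc 0 r₀) = lb)
    (hρpInf : 0 ≤ ρpInf ∧ bary μ (Set.Ici ρpInf) = ub)
    (hρpr₀ : 0 ≤ ρpr₀ ∧ ρpr₀ ≤ r₀ ∧ bary μ (Set.Icc ρpr₀ r₀) = ub)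
    (hρmρpInf : ρpInf ≤ ρmρpInf ∧ bary μ (Set.Icc ρpInf ρmρpInf) = lb)
    (hc1 : ub < r₀) (hc2 : ρpInf < lb) (hc3 : ρpr₀ < ρmρpInf) :
    (μ (Set.Ioo ρpInf ρpr₀)).toReal
      ≤ (S₀ - lb) / (ub - lb) - (μ (Set.Ioi r₀)).toReal :=
  stmt14_general μ hsupp hint S₀ lb ub r₀ ρpInf ρpr₀ ρmρpInf hmean h0 h1 h2 hr₀ hρpInf hρpr₀
    hρmρpInf hc1 hc3
end
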